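/- Let d ≥ 1, t > 1 and ν₀, ν₁, μ₀, μ₁ ∈ P₂(ℝ^d). Let γ be a probability measure on ℝ^d×ℝ^d×ℝ^d whose marginal onto the first and second coordinates is an optimal coupling between ν₁ and μ₀ for the quadratic cost, and whose marginal onto the first and third coordinates is an optimal coupling between ν₁ and μ₁. For s ∈ [0,1] define μ(s) as the pushforward of γ under the map (x,y₀,y₁) ↦ (1−s)y₀ + s y₁. Then for all s ∈ [0,1], F_t(ν₀,ν₁;μ(s)) ≤ (1−s)·F_t(ν₀,ν₁;μ₀) + s·F_t(ν₀,ν₁;μ₁) − (s(1−s)/2)·W₂²(μ₀,μ₁)/(t(t−1)). -/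

import Mathlib

open MeasureTheory
open scoped ENNReal

noncomputable section

abbrev EucSp (d : ℕ) := EuclideanSpace ℝ (Fin d)

/-- `γ` is a coupling of `μ` and `ν`. -/
def IsCoupling {d : ℕ} (γ : Measure (EucSp d × EucSp d)) (μ ν : Measure (EucSp d)) : Prop :=
  γ.map Prod.fst = μ ∧ γ.map Prod.snd = ν

/-- Probability measures on `ℝ^d` with finite second moment. -/
def P2 (d : ℕ) : Set (Measure (EucSp d)) :=
  {μ | IsProbabilityMeasure μ ∧ Integrable (fun x => ‖x‖ ^ 2) μ}

/-- Squared Wasserstein distance. -/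
noncomputable def W2sq {d : ℕ} (μ ν : Measure (EucSp d)) : ℝ :=
  sInf {r | ∃ γ : Measure (EucSp d × EucSp d), IsProbabilityMeasure γ ∧ IsCoupling γ μ ν ∧
      r = ∫ p, ‖p.1 - p.2‖ ^ 2 ∂γ}

/-- Wasserstein distance. -/
noncomputable def W2 {d : ℕ} (μ ν : Measure (EucSp d)) : ℝ := Real.sqrt (W2sq μ ν)

/-- Metric extrapolation functional. -/
noncomputable def Ft {d : ℕ} (t : ℝ) (ν₀ ν₁ μ : Measure (EucSp d)) : ℝ :=
  W2sq μ ν₁ / (2 * (t - 1)) - W2sq μ ν₀ / (2 * t)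

/-- `μ` minimizes the metric extrapolation functional over `P2 d`. -/
def IsExtrapolation {d : ℕ} (t : ℝ) (ν₀ ν₁ μ : Measure (EucSp d)) : Prop :=
  μ ∈ P2 d ∧ ∀ ρ ∈ P2 d, Ft t ν₀ ν₁ μ ≤ Ft t ν₀ ν₁ ρ

end

/-- `γ` is an optimal coupling of `μ` and `ν` for the quadratic cost. -/
def IsOptimalCoupling {d : ℕ} (γ : Measure (EucSp d × EucSp d)) (μ ν : Measure (EucSp d)) : Prop :=
  IsProbabilityMeasure γ ∧ IsCoupling γ μ ν ∧ (∫ p, ‖p.1 - p.2‖ ^ 2 ∂γ) = W2sq μ ν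

section Auxiliary

open ProbabilityTheory
open scoped InnerProductSpace

variable {d : ℕ}

private lemma norm_combo' {E : Type*} [NormedAddCommGroup E] [InnerProductSpace ℝ E]
    (s : ℝ) (u v : E) :
    ‖(1-s) • u + s • v‖^2 = (1-s)*‖u‖^2 + s*‖v‖^2 - s*(1-s)*‖u-v‖^2 := by
  have h : ∀ w : E, ‖w‖^2 = ⟪w, w⟫_ℝ := fun w => (real_inner_self_eq_norm_sq w).symm
  simp only [h, inner_add_add_self, inner_sub_sub_self, real_inner_smul_left,
    real_inner_smul_right]
  ring

private lemma contNormSq : Continuous fun x : EucSp d => ‖x‖ ^ 2 := continuous_norm.pow 2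

private lemma contCost : Continuous fun p : EucSp d × EucSp d => ‖p.1 - p.2‖ ^ 2 :=
  ((continuous_fst.sub continuous_snd).norm).pow 2

private lemma integrable_normsq_of_map {α : Type*} [MeasurableSpace α] {μ : Measure α}
    {f : α → EucSp d} (hf : Measurable f) {ν : Measure (EucSp d)} (hmap : μ.map f = ν)
    (hi : Integrable (fun x => ‖x‖ ^ 2) ν) : Integrable (fun a => ‖f a‖ ^ 2) μ := by
  rw [← hmap] at hi
  exact (integrable_map_measure contNormSq.aestronglyMeasurable hf.aemeasurable).mp hi

private lemma integrable_cost_sub {α : Type*} [MeasurableSpace α] {μ : Measure α}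
    {f g : α → EucSp d} (hf : Measurable f) (hg : Measurable g)
    (hf2 : Integrable (fun a => ‖f a‖ ^ 2) μ) (hg2 : Integrable (fun a => ‖g a‖ ^ 2) μ) :
    Integrable (fun a => ‖f a - g a‖ ^ 2) μ := by
  refine Integrable.mono' ((hf2.const_mul 2).add (hg2.const_mul 2))
    (((hf.sub hg).norm.pow_const 2).aestronglyMeasurable) ?_
  filter_upwards with a
  rw [Real.norm_eq_abs, abs_of_nonneg (by positivity)]
  show ‖f a - g a‖ ^ 2 ≤ 2 * ‖f a‖ ^ 2 + 2 * ‖g a‖ ^ 2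
  nlinarith [norm_sub_le (f a) (g a), norm_nonneg (f a), norm_nonneg (g a),
    norm_nonneg (f a - g a), sq_nonneg (‖f a‖ - ‖g a‖)]

private lemma W2sq_le' {μ ν : Measure (EucSp d)} {γ' : Measure (EucSp d × EucSp d)}
    (h1 : IsProbabilityMeasure γ') (h2 : IsCoupling γ' μ ν) :
    W2sq μ ν ≤ ∫ p, ‖p.1 - p.2‖ ^ 2 ∂γ' := by
  refine csInf_le ⟨0, ?_⟩ ⟨γ', h1, h2, rfl⟩
  rintro r ⟨g, -, -, rfl⟩
  exact integral_nonneg fun p => by positivity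

private lemma W2sq_symm' (μ ν : Measure (EucSp d)) : W2sq μ ν = W2sq ν μ := by
  have key : ∀ (a b : Measure (EucSp d)) (r : ℝ),
      (∃ g : Measure (EucSp d × EucSp d), IsProbabilityMeasure g ∧ IsCoupling g a b ∧
        r = ∫ p, ‖p.1 - p.2‖ ^ 2 ∂g) →
      (∃ g : Measure (EucSp d × EucSp d), IsProbabilityMeasure g ∧ IsCoupling g b a ∧
        r = ∫ p, ‖p.1 - p.2‖ ^ 2 ∂g) := by
    rintro a b r ⟨g, hg, ⟨hg1, hg2⟩, rfl⟩
    refine ⟨g.map Prod.swap, Measure.isProbabilityMeasure_map measurable_swap.aemeasurable, ⟨?_, ?_⟩, ?_⟩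
    · rw [Measure.map_map measurable_fst measurable_swap]; exact hg2
    · rw [Measure.map_map measurable_snd measurable_swap]; exact hg1
    · rw [integral_map measurable_swap.aemeasurable contCost.aestronglyMeasurable]
      exact integral_congr_ae (Filter.Eventually.of_forall fun p => by
        simp [norm_sub_rev p.2 p.1])
  unfold W2sq
  congr 1
  ext r
  exact ⟨key μ ν r, key ν μ r⟩

private lemma glue_aux (γ : Measure (EucSp d × EucSp d × EucSp d)) [IsProbabilityMeasure γ]
    {T : EucSp d × EucSp d × EucSp d → EucSp d} (hT : Measurable T)
    (σ : Measure (EucSp d × EucSp d)) [IsProbabilityMeasure σ]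
    (hσ : σ.map Prod.fst = γ.map T) :
    ∃ η : Measure ((EucSp d × EucSp d × EucSp d) × EucSp d), IsProbabilityMeasure η ∧
      η.map Prod.fst = γ ∧ η.map (fun q => (T q.1, q.2)) = σ := by
  set κ : Kernel (EucSp d × EucSp d × EucSp d) (EucSp d) := σ.condKernel.comap T hT with hκ
  have hmk : IsMarkovKernel κ := by rw [hκ]; infer_instance
  refine ⟨γ.compProd κ, inferInstance, ?_, ?_⟩
  · exact Measure.fst_compProd γ κ
  · have hf : Measurable (fun q : (EucSp d × EucSp d × EucSp d) × EucSp d => (T q.1, q.2)) :=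
      (hT.comp measurable_fst).prodMk measurable_snd
    ext u hu
    calc (γ.compProd κ).map (fun q => (T q.1, q.2)) u
        = ∫⁻ p, σ.condKernel (T p) (Prod.mk (T p) ⁻¹' u) ∂γ := by
          rw [Measure.map_apply hf hu, Measure.compProd_apply (hf hu)]
          exact lintegral_congr fun p => by rw [hκ, Kernel.comap_apply]; rfl
      _ = ∫⁻ x, σ.condKernel x (Prod.mk x ⁻¹' u) ∂(γ.map T) :=
          (lintegral_map (Kernel.measurable_kernel_prodMk_left hu) hT).symm
      _ = ∫⁻ x, σ.condKernel x (Prod.mk x ⁻¹' u) ∂σ.fst := by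
          rw [show γ.map T = σ.fst from hσ.symm]
      _ = (σ.fst.compProd σ.condKernel) u := (Measure.compProd_apply hu).symm
      _ = σ u := by rw [Measure.disintegrate]

private lemma alg_final {a0 a1 as b0 b1 bs C W s t : ℝ} (ht : 1 < t) (hs0 : 0 ≤ s) (hs1 : s ≤ 1)
    (hU : as ≤ (1-s)*a0 + s*a1 - s*(1-s)*C)
    (hL : (1-s)*b0 + s*b1 - s*(1-s)*C ≤ bs)
    (hM : W ≤ C) :
    as/(2*(t-1)) - bs/(2*t) ≤ (1-s)*(a0/(2*(t-1)) - b0/(2*t)) + s*(a1/(2*(t-1)) - b1/(2*t))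
      - (s*(1-s)/2)*(W/(t*(t-1))) := by
  have h1 : (0:ℝ) < t - 1 := by linarith
  have h2 : (0:ℝ) < t := by linarith
  have hkey : t*as - (t-1)*bs ≤ (1-s)*(t*a0 - (t-1)*b0) + s*(t*a1 - (t-1)*b1) - s*(1-s)*W := by
    nlinarith [mul_le_mul_of_nonneg_left hU h2.le, mul_le_mul_of_nonneg_left hL h1.le,
      mul_le_mul_of_nonneg_right hM (mul_nonneg hs0 (by linarith : (0:ℝ) ≤ 1-s))]
  have hpos : (0:ℝ) < 2*t*(t-1) := by positivity
  rw [show as/(2*(t-1)) - bs/(2*t) = (t*as - (t-1)*bs)/(2*t*(t-1)) by field_simp,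
      show (1-s)*(a0/(2*(t-1)) - b0/(2*t)) + s*(a1/(2*(t-1)) - b1/(2*t))
          - (s*(1-s)/2)*(W/(t*(t-1)))
        = ((1-s)*(t*a0 - (t-1)*b0) + s*(t*a1 - (t-1)*b1) - s*(1-s)*W)/(2*t*(t-1)) by
        field_simp]
  exact (div_le_div_iff_of_pos_right hpos).mpr hkey

end Auxiliary

/-- strong convexity of the metric extrapolation functional along
generalized geodesics with base `ν₁`. -/
theorem stmt_1 {d : ℕ} (hd : 1 ≤ d) {t : ℝ} (ht : 1 < t)
    (ν₀ ν₁ μ₀ μ₁ : Measure (EucSp d))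
    (h₀ : ν₀ ∈ P2 d) (h₁ : ν₁ ∈ P2 d) (hμ₀ : μ₀ ∈ P2 d) (hμ₁ : μ₁ ∈ P2 d)
    (γ : Measure (EucSp d × EucSp d × EucSp d)) (hγ : IsProbabilityMeasure γ)
    (h12 : IsOptimalCoupling (γ.map (fun p => (p.1, p.2.1))) ν₁ μ₀)
    (h13 : IsOptimalCoupling (γ.map (fun p => (p.1, p.2.2))) ν₁ μ₁) :
    ∀ s ∈ Set.Icc (0 : ℝ) 1,
      Ft t ν₀ ν₁ (γ.map (fun p => (1 - s) • p.2.1 + s • p.2.2)) ≤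
        (1 - s) * Ft t ν₀ ν₁ μ₀ + s * Ft t ν₀ ν₁ μ₁
          - (s * (1 - s) / 2) * (W2sq μ₀ μ₁ / (t * (t - 1))) := by
  haveI := hγ
  rintro s ⟨hs0, hs1⟩
  -- measurable projections on the triple product
  have h1m : Measurable fun p : EucSp d × EucSp d × EucSp d => p.1 := measurable_fst
  have h21 : Measurable fun p : EucSp d × EucSp d × EucSp d => p.2.1 :=
    measurable_fst.comp measurable_snd
  have h22 : Measurable fun p : EucSp d × EucSp d × EucSp d => p.2.2 :=
    measurable_snd.comp measurable_snd
  set T : EucSp d × EucSp d × EucSp d → EucSp d :=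
    fun p => (1 - s) • p.2.1 + s • p.2.2 with hTdef
  have hT : Measurable T := (h21.const_smul (1-s)).add (h22.const_smul s)
  haveI : IsProbabilityMeasure (γ.map T) := Measure.isProbabilityMeasure_map hT.aemeasurable
  have hf12 : Measurable fun p : EucSp d × EucSp d × EucSp d => (p.1, p.2.1) :=
    h1m.prodMk h21
  have hf13 : Measurable fun p : EucSp d × EucSp d × EucSp d => (p.1, p.2.2) :=
    h1m.prodMk h22
  -- marginals of γ
  have hγ1 : γ.map (fun p => p.1) = ν₁ := by
    rw [← h12.2.1.1]; exact (Measure.map_map measurable_fst hf12).symm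
  have hγ2 : γ.map (fun p => p.2.1) = μ₀ := by
    rw [← h12.2.1.2]; exact (Measure.map_map measurable_snd hf12).symm
  have hγ3 : γ.map (fun p => p.2.2) = μ₁ := by
    rw [← h13.2.1.2]; exact (Measure.map_map measurable_snd hf13).symm
  -- second moments w.r.t. γ
  have i1 : Integrable (fun p : EucSp d × EucSp d × EucSp d => ‖p.1‖ ^ 2) γ :=
    integrable_normsq_of_map h1m hγ1 h₁.2
  have i2 : Integrable (fun p : EucSp d × EucSp d × EucSp d => ‖p.2.1‖ ^ 2) γ :=
    integrable_normsq_of_map h21 hγ2 hμ₀.2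
  have i3 : Integrable (fun p : EucSp d × EucSp d × EucSp d => ‖p.2.2‖ ^ 2) γ :=
    integrable_normsq_of_map h22 hγ3 hμ₁.2
  set C : ℝ := ∫ p, ‖p.2.1 - p.2.2‖ ^ 2 ∂γ with hCdef
  -- pointwise expansion
  have expand : ∀ y0 y1 x : EucSp d,
      ‖((1-s) • y0 + s • y1) - x‖ ^ 2
        = (1-s) * ‖y0 - x‖ ^ 2 + s * ‖y1 - x‖ ^ 2 - s * (1-s) * ‖y0 - y1‖ ^ 2 := by
    intro y0 y1 x
    have h := norm_combo' s (y0 - x) (y1 - x)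
    have e1 : (1-s) • (y0 - x) + s • (y1 - x) = ((1-s) • y0 + s • y1) - x := by
      module
    have e2 : (y0 - x) - (y1 - x) = y0 - y1 := by abel
    rw [e1, e2] at h
    exact h
  -- the middle bound : W2sq μ₀ μ₁ ≤ C
  have hg23 : Measurable fun p : EucSp d × EucSp d × EucSp d => (p.2.1, p.2.2) :=
    h21.prodMk h22
  have hM : W2sq μ₀ μ₁ ≤ C := by
    have hcoup : IsCoupling (γ.map fun p => (p.2.1, p.2.2)) μ₀ μ₁ :=
      ⟨(Measure.map_map measurable_fst hg23).trans hγ2,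
       (Measure.map_map measurable_snd hg23).trans hγ3⟩
    have h := W2sq_le' (Measure.isProbabilityMeasure_map hg23.aemeasurable) hcoup
    rw [integral_map hg23.aemeasurable contCost.aestronglyMeasurable] at h
    exact h
  -- upper bound for W2sq (γ.map T) ν₁
  have hgT1 : Measurable fun p : EucSp d × EucSp d × EucSp d => (T p, p.1) :=
    hT.prodMk h1m
  have ic01 : Integrable (fun p : EucSp d × EucSp d × EucSp d => ‖p.2.1 - p.1‖ ^ 2) γ :=
    integrable_cost_sub h21 h1m i2 i1
  have ic11 : Integrable (fun p : EucSp d × EucSp d × EucSp d => ‖p.2.2 - p.1‖ ^ 2) γ :=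
    integrable_cost_sub h22 h1m i3 i1
  have icC : Integrable (fun p : EucSp d × EucSp d × EucSp d => ‖p.2.1 - p.2.2‖ ^ 2) γ :=
    integrable_cost_sub h21 h22 i2 i3
  have e12 : ∫ p, ‖p.2.1 - p.1‖ ^ 2 ∂γ = W2sq ν₁ μ₀ := by
    rw [← h12.2.2, integral_map hf12.aemeasurable contCost.aestronglyMeasurable]
    exact integral_congr_ae (Filter.Eventually.of_forall fun p => by
      simp [norm_sub_rev p.2.1 p.1])
  have e13 : ∫ p, ‖p.2.2 - p.1‖ ^ 2 ∂γ = W2sq ν₁ μ₁ := by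
    rw [← h13.2.2, integral_map hf13.aemeasurable contCost.aestronglyMeasurable]
    exact integral_congr_ae (Filter.Eventually.of_forall fun p => by
      simp [norm_sub_rev p.2.2 p.1])
  have hsplitU : ∫ p, ‖T p - p.1‖ ^ 2 ∂γ
      = (1-s) * ∫ p, ‖p.2.1 - p.1‖ ^ 2 ∂γ + s * ∫ p, ‖p.2.2 - p.1‖ ^ 2 ∂γ - s * (1-s) * C := by
    have hpt : ∀ p : EucSp d × EucSp d × EucSp d,
        ‖T p - p.1‖ ^ 2 = (1-s) * ‖p.2.1 - p.1‖ ^ 2 + s * ‖p.2.2 - p.1‖ ^ 2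
          - s * (1-s) * ‖p.2.1 - p.2.2‖ ^ 2 := fun p => expand p.2.1 p.2.2 p.1
    calc ∫ p, ‖T p - p.1‖ ^ 2 ∂γ
        = ∫ p, ((1-s) * ‖p.2.1 - p.1‖ ^ 2 + s * ‖p.2.2 - p.1‖ ^ 2
            - s * (1-s) * ‖p.2.1 - p.2.2‖ ^ 2) ∂γ :=
          integral_congr_ae (Filter.Eventually.of_forall hpt)
      _ = (1-s) * ∫ p, ‖p.2.1 - p.1‖ ^ 2 ∂γ + s * ∫ p, ‖p.2.2 - p.1‖ ^ 2 ∂γ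
            - s * (1-s) * C := by
          have hadd : Integrable (fun p : EucSp d × EucSp d × EucSp d =>
              (1-s) * ‖p.2.1 - p.1‖ ^ 2 + s * ‖p.2.2 - p.1‖ ^ 2) γ :=
            (ic01.const_mul _).add (ic11.const_mul _)
          rw [integral_sub hadd (icC.const_mul _),
            integral_add (ic01.const_mul _) (ic11.const_mul _),
            integral_const_mul, integral_const_mul, integral_const_mul]
  have hU : W2sq (γ.map T) ν₁
      ≤ (1-s) * W2sq μ₀ ν₁ + s * W2sq μ₁ ν₁ - s * (1-s) * C := by
    have hcoup : IsCoupling (γ.map fun p => (T p, p.1)) (γ.map T) ν₁ :=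
      ⟨Measure.map_map measurable_fst hgT1,
       (Measure.map_map measurable_snd hgT1).trans hγ1⟩
    have h := W2sq_le' (Measure.isProbabilityMeasure_map hgT1.aemeasurable) hcoup
    rw [integral_map hgT1.aemeasurable contCost.aestronglyMeasurable] at h
    calc W2sq (γ.map T) ν₁ ≤ ∫ p, ‖T p - p.1‖ ^ 2 ∂γ := h
      _ = (1-s) * W2sq ν₁ μ₀ + s * W2sq ν₁ μ₁ - s * (1-s) * C := by
          rw [hsplitU, e12, e13]
      _ = (1-s) * W2sq μ₀ ν₁ + s * W2sq μ₁ ν₁ - s * (1-s) * C := by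
          rw [W2sq_symm' ν₁ μ₀, W2sq_symm' ν₁ μ₁]
  -- lower bound for W2sq (γ.map T) ν₀
  haveI := h₀.1
  have hL : (1-s) * W2sq μ₀ ν₀ + s * W2sq μ₁ ν₀ - s * (1-s) * C ≤ W2sq (γ.map T) ν₀ := by
    refine le_csInf ⟨_, (γ.map T).prod ν₀, inferInstance, ⟨Measure.fst_prod, Measure.snd_prod⟩,
      rfl⟩ ?_
    rintro r ⟨σ, hσp, hσc, rfl⟩
    haveI := hσp
    obtain ⟨η, hηp, hη1, hησ⟩ := glue_aux γ hT σ hσc.1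
    haveI := hηp
    have hfT : Measurable fun q : (EucSp d × EucSp d × EucSp d) × EucSp d => (T q.1, q.2) :=
      (hT.comp measurable_fst).prodMk measurable_snd
    have k0 : Measurable fun q : (EucSp d × EucSp d × EucSp d) × EucSp d => q.1.2.1 :=
      h21.comp measurable_fst
    have k1 : Measurable fun q : (EucSp d × EucSp d × EucSp d) × EucSp d => q.1.2.2 :=
      h22.comp measurable_fst
    have kz : Measurable fun q : (EucSp d × EucSp d × EucSp d) × EucSp d => q.2 :=
      measurable_snd
    -- marginals of η
    have hy0 : η.map (fun q => q.1.2.1) = μ₀ := by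
      rw [← hγ2, ← hη1]; exact (Measure.map_map h21 measurable_fst).symm
    have hy1 : η.map (fun q => q.1.2.2) = μ₁ := by
      rw [← hγ3, ← hη1]; exact (Measure.map_map h22 measurable_fst).symm
    have hz : η.map Prod.snd = ν₀ := by
      rw [← hσc.2, ← hησ]; exact (Measure.map_map measurable_snd hfT).symm
    -- second moments w.r.t. η
    have j0 : Integrable (fun q : (EucSp d × EucSp d × EucSp d) × EucSp d => ‖q.1.2.1‖ ^ 2) η :=
      integrable_normsq_of_map k0 hy0 hμ₀.2
    have j1 : Integrable (fun q : (EucSp d × EucSp d × EucSp d) × EucSp d => ‖q.1.2.2‖ ^ 2) η :=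
      integrable_normsq_of_map k1 hy1 hμ₁.2
    have jz : Integrable (fun q : (EucSp d × EucSp d × EucSp d) × EucSp d => ‖q.2‖ ^ 2) η :=
      integrable_normsq_of_map kz hz h₀.2
    have jc0 : Integrable (fun q : (EucSp d × EucSp d × EucSp d) × EucSp d =>
        ‖q.1.2.1 - q.2‖ ^ 2) η := integrable_cost_sub k0 kz j0 jz
    have jc1 : Integrable (fun q : (EucSp d × EucSp d × EucSp d) × EucSp d =>
        ‖q.1.2.2 - q.2‖ ^ 2) η := integrable_cost_sub k1 kz j1 jz
    have jcC : Integrable (fun q : (EucSp d × EucSp d × EucSp d) × EucSp d =>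
        ‖q.1.2.1 - q.1.2.2‖ ^ 2) η := integrable_cost_sub k0 k1 j0 j1
    -- bounds via couplings extracted from η
    have hb0 : W2sq μ₀ ν₀ ≤ ∫ q, ‖q.1.2.1 - q.2‖ ^ 2 ∂η := by
      have hg : Measurable fun q : (EucSp d × EucSp d × EucSp d) × EucSp d => (q.1.2.1, q.2) :=
        k0.prodMk kz
      have hcoup : IsCoupling (η.map fun q => (q.1.2.1, q.2)) μ₀ ν₀ :=
        ⟨(Measure.map_map measurable_fst hg).trans hy0,
         (Measure.map_map measurable_snd hg).trans hz⟩
      have h := W2sq_le' (Measure.isProbabilityMeasure_map hg.aemeasurable) hcoup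
      rw [integral_map hg.aemeasurable contCost.aestronglyMeasurable] at h
      exact h
    have hb1 : W2sq μ₁ ν₀ ≤ ∫ q, ‖q.1.2.2 - q.2‖ ^ 2 ∂η := by
      have hg : Measurable fun q : (EucSp d × EucSp d × EucSp d) × EucSp d => (q.1.2.2, q.2) :=
        k1.prodMk kz
      have hcoup : IsCoupling (η.map fun q => (q.1.2.2, q.2)) μ₁ ν₀ :=
        ⟨(Measure.map_map measurable_fst hg).trans hy1,
         (Measure.map_map measurable_snd hg).trans hz⟩
      have h := W2sq_le' (Measure.isProbabilityMeasure_map hg.aemeasurable) hcoup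
      rw [integral_map hg.aemeasurable contCost.aestronglyMeasurable] at h
      exact h
    have hCeq : ∫ q, ‖q.1.2.1 - q.1.2.2‖ ^ 2 ∂η = C := by
      rw [hCdef, ← hη1]
      exact (integral_map measurable_fst.aemeasurable
        (((h21.sub h22).norm.pow_const 2).aestronglyMeasurable)).symm
    have hval : ∫ p, ‖p.1 - p.2‖ ^ 2 ∂σ = ∫ q, ‖T q.1 - q.2‖ ^ 2 ∂η := by
      rw [← hησ, integral_map hfT.aemeasurable contCost.aestronglyMeasurable]
    have hsplitL : ∫ q, ‖T q.1 - q.2‖ ^ 2 ∂η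
        = (1-s) * ∫ q, ‖q.1.2.1 - q.2‖ ^ 2 ∂η + s * ∫ q, ‖q.1.2.2 - q.2‖ ^ 2 ∂η
          - s * (1-s) * ∫ q, ‖q.1.2.1 - q.1.2.2‖ ^ 2 ∂η := by
      have hpt : ∀ q : (EucSp d × EucSp d × EucSp d) × EucSp d,
          ‖T q.1 - q.2‖ ^ 2 = (1-s) * ‖q.1.2.1 - q.2‖ ^ 2 + s * ‖q.1.2.2 - q.2‖ ^ 2
            - s * (1-s) * ‖q.1.2.1 - q.1.2.2‖ ^ 2 := fun q => expand q.1.2.1 q.1.2.2 q.2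
      calc ∫ q, ‖T q.1 - q.2‖ ^ 2 ∂η
          = ∫ q, ((1-s) * ‖q.1.2.1 - q.2‖ ^ 2 + s * ‖q.1.2.2 - q.2‖ ^ 2
              - s * (1-s) * ‖q.1.2.1 - q.1.2.2‖ ^ 2) ∂η :=
            integral_congr_ae (Filter.Eventually.of_forall hpt)
        _ = _ := by
            have hadd : Integrable (fun q : (EucSp d × EucSp d × EucSp d) × EucSp d =>
                (1-s) * ‖q.1.2.1 - q.2‖ ^ 2 + s * ‖q.1.2.2 - q.2‖ ^ 2) η :=
              (jc0.const_mul _).add (jc1.const_mul _)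
            rw [integral_sub hadd (jcC.const_mul _),
              integral_add (jc0.const_mul _) (jc1.const_mul _),
              integral_const_mul, integral_const_mul, integral_const_mul]
    rw [hval, hsplitL, hCeq]
    have m0 := mul_le_mul_of_nonneg_left hb0 (by linarith : (0:ℝ) ≤ 1 - s)
    have m1 := mul_le_mul_of_nonneg_left hb1 hs0
    linarith
  -- conclude
  show W2sq (γ.map T) ν₁ / (2 * (t - 1)) - W2sq (γ.map T) ν₀ / (2 * t)
      ≤ (1 - s) * (W2sq μ₀ ν₁ / (2 * (t - 1)) - W2sq μ₀ ν₀ / (2 * t))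
        + s * (W2sq μ₁ ν₁ / (2 * (t - 1)) - W2sq μ₁ ν₀ / (2 * t))
        - (s * (1 - s) / 2) * (W2sq μ₀ μ₁ / (t * (t - 1)))
  exact alg_final ht hs0 hs1 hU hL hM
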